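/- The six lines x-4z=0, x+4z=0, 3x+4y=0, x+3z=0, 6x+y+21z=0, y+3z=0 of the arrangement CL1 are pairwise distinct, and each of them intersects the conic x^2+y^2-25z^2=0 in exactly two distinct points. -/

import Mathlib

/-!
Modulo the equation of each line, the equation of the conic factors into two linear forms;
each factor cuts out one intersection point, and the two points are distinct in the affine
chart `z = 1`. Two lines are proportional only if all `2 × 2` minors of their coefficient
vectors vanish, which fails for every pair.
-/

open MvPolynomial

noncomputable def conic : MvPolynomial (Fin 3) ℂ :=
  X 0 ^ 2 + X 1 ^ 2 - 25 * X 2 ^ 2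

noncomputable def L1 : Fin 6 → MvPolynomial (Fin 3) ℂ :=
  ![X 0 - 4 * X 2, X 0 + 4 * X 2, 3 * X 0 + 4 * X 1, X 0 + 3 * X 2,
    6 * X 0 + X 1 + 21 * X 2, X 1 + 3 * X 2]

theorem Projectivization.setOf_rep_eq_pair {K V : Type*} [DivisionRing K] [AddCommGroup V]
    [Module K V] {S : V → Prop} {a b : V} (ha : a ≠ 0) (hb : b ≠ 0)
    (hS : ∀ v, v ≠ 0 → (S v ↔ (∃ c : K, c • a = v) ∨ ∃ c : K, c • b = v)) :
    {p : Projectivization K V | S p.rep} = {mk K a ha, mk K b hb} := by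
  ext p
  conv_rhs => rw [← p.mk_rep]
  simp only [Set.mem_ofPred_eq, Set.mem_insert_iff, Set.mem_singleton_iff,
    mk_eq_mk_iff', hS p.rep p.rep_nonzero]

theorem eval_mul_eval_eq_of_eq_smul {σ R : Type*} [CommSemiring R] {P Q : MvPolynomial σ R}
    {c : R} (h : P = c • Q) (u w : σ → R) :
    eval u P * eval w Q = eval w P * eval u Q := by
  rw [h, smul_eval, smul_eval]
  ring

theorem exists_smul_eq_of_affine {K : Type*} [CommSemiring K] {v : Fin 3 → K} {x y : K}
    (hx : v 0 = x * v 2) (hy : v 1 = y * v 2) : ∃ c : K, c • ![x, y, 1] = v := by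
  refine ⟨v 2, funext fun k => ?_⟩
  fin_cases k <;> simp [hx, hy, mul_comm]

theorem ncard_setOf_rep_eq_two_of_affine {K : Type*} [DivisionRing K] {S : (Fin 3 → K) → Prop}
    {x₁ y₁ x₂ y₂ : K} (hne : x₁ ≠ x₂ ∨ y₁ ≠ y₂)
    (hS : ∀ v, S v ↔ (∃ c : K, c • ![x₁, y₁, 1] = v) ∨ ∃ c : K, c • ![x₂, y₂, 1] = v) :
    {p : Projectivization K (Fin 3 → K) | S p.rep}.ncard = 2 := by
  have hz : ∀ x y : K, ![x, y, 1] ≠ 0 := fun x y h => by simpa using congrFun h 2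
  rw [Projectivization.setOf_rep_eq_pair (hz x₁ y₁) (hz x₂ y₂) fun v _ => hS v]
  refine Set.ncard_pair fun h => ?_
  obtain ⟨c, hc⟩ := (Projectivization.mk_eq_mk_iff' K _ _ _ _).1 h
  have hc1 : c = 1 := by simpa using congrFun hc 2
  rw [hc1, one_smul] at hc
  rcases hne with hx | hy
  · exact hx (by simpa using (congrFun hc 0).symm)
  · exact hy (by simpa using (congrFun hc 1).symm)

theorem L1_zero_inter_conic_iff (v : Fin 3 → ℂ) :
    eval v (L1 0) = 0 ∧ eval v conic = 0 ↔
      (∃ c : ℂ, c • ![4, 3, 1] = v) ∨ ∃ c : ℂ, c • ![4, -3, 1] = v := by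
  constructor
  · rintro ⟨hl, hq⟩
    simp only [L1, conic, Matrix.cons_val, map_add, map_sub, map_mul, map_pow, eval_X,
      eval_ofNat] at hl hq
    have hfac : (v 1 - 3 * v 2) * (v 1 + 3 * v 2) = 0 := by
      linear_combination hq - (v 0 + 4 * v 2) * hl
    rcases mul_eq_zero.1 hfac with h | h
    · exact .inl <| exists_smul_eq_of_affine (by linear_combination hl)
        (by linear_combination h)
    · exact .inr <| exists_smul_eq_of_affine (by linear_combination hl)
        (by linear_combination h)
  · rintro (⟨c, rfl⟩ | ⟨c, rfl⟩) <;> constructor <;>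
      simp only [L1, conic, Matrix.cons_val, map_add, map_sub, map_mul, map_pow, eval_X,
        eval_ofNat, Pi.smul_apply, smul_eq_mul] <;> ring

theorem L1_one_inter_conic_iff (v : Fin 3 → ℂ) :
    eval v (L1 1) = 0 ∧ eval v conic = 0 ↔
      (∃ c : ℂ, c • ![-4, 3, 1] = v) ∨ ∃ c : ℂ, c • ![-4, -3, 1] = v := by
  constructor
  · rintro ⟨hl, hq⟩
    simp only [L1, conic, Matrix.cons_val, map_add, map_sub, map_mul, map_pow, eval_X,
      eval_ofNat] at hl hq
    have hfac : (v 1 - 3 * v 2) * (v 1 + 3 * v 2) = 0 := by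
      linear_combination hq - (v 0 - 4 * v 2) * hl
    rcases mul_eq_zero.1 hfac with h | h
    · exact .inl <| exists_smul_eq_of_affine (by linear_combination hl)
        (by linear_combination h)
    · exact .inr <| exists_smul_eq_of_affine (by linear_combination hl)
        (by linear_combination h)
  · rintro (⟨c, rfl⟩ | ⟨c, rfl⟩) <;> constructor <;>
      simp only [L1, conic, Matrix.cons_val, map_add, map_sub, map_mul, map_pow, eval_X,
        eval_ofNat, Pi.smul_apply, smul_eq_mul] <;> ring

theorem L1_two_inter_conic_iff (v : Fin 3 → ℂ) :
    eval v (L1 2) = 0 ∧ eval v conic = 0 ↔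
      (∃ c : ℂ, c • ![4, -3, 1] = v) ∨ ∃ c : ℂ, c • ![-4, 3, 1] = v := by
  constructor
  · rintro ⟨hl, hq⟩
    simp only [L1, conic, Matrix.cons_val, map_add, map_sub, map_mul, map_pow, eval_X,
      eval_ofNat] at hl hq
    have hfac : (v 0 - 4 * v 2) * (v 0 + 4 * v 2) = 0 := by
      linear_combination (16 / 25) * hq + (3 * v 0 - 4 * v 1) / 25 * hl
    rcases mul_eq_zero.1 hfac with h | h
    · exact .inl <| exists_smul_eq_of_affine (by linear_combination h)
        (by linear_combination hl / 4 - (3 / 4) * h)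
    · exact .inr <| exists_smul_eq_of_affine (by linear_combination h)
        (by linear_combination hl / 4 - (3 / 4) * h)
  · rintro (⟨c, rfl⟩ | ⟨c, rfl⟩) <;> constructor <;>
      simp only [L1, conic, Matrix.cons_val, map_add, map_sub, map_mul, map_pow, eval_X,
        eval_ofNat, Pi.smul_apply, smul_eq_mul] <;> ring

theorem L1_three_inter_conic_iff (v : Fin 3 → ℂ) :
    eval v (L1 3) = 0 ∧ eval v conic = 0 ↔
      (∃ c : ℂ, c • ![-3, 4, 1] = v) ∨ ∃ c : ℂ, c • ![-3, -4, 1] = v := by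
  constructor
  · rintro ⟨hl, hq⟩
    simp only [L1, conic, Matrix.cons_val, map_add, map_sub, map_mul, map_pow, eval_X,
      eval_ofNat] at hl hq
    have hfac : (v 1 - 4 * v 2) * (v 1 + 4 * v 2) = 0 := by
      linear_combination hq - (v 0 - 3 * v 2) * hl
    rcases mul_eq_zero.1 hfac with h | h
    · exact .inl <| exists_smul_eq_of_affine (by linear_combination hl)
        (by linear_combination h)
    · exact .inr <| exists_smul_eq_of_affine (by linear_combination hl)
        (by linear_combination h)
  · rintro (⟨c, rfl⟩ | ⟨c, rfl⟩) <;> constructor <;>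
      simp only [L1, conic, Matrix.cons_val, map_add, map_sub, map_mul, map_pow, eval_X,
        eval_ofNat, Pi.smul_apply, smul_eq_mul] <;> ring

theorem L1_four_inter_conic_iff (v : Fin 3 → ℂ) :
    eval v (L1 4) = 0 ∧ eval v conic = 0 ↔
      (∃ c : ℂ, c • ![-4, 3, 1] = v) ∨ ∃ c : ℂ, c • ![-104 / 37, -153 / 37, 1] = v := by
  constructor
  · rintro ⟨hl, hq⟩
    simp only [L1, conic, Matrix.cons_val, map_add, map_sub, map_mul, map_pow, eval_X,
      eval_ofNat] at hl hq
    have hfac : (v 0 + 4 * v 2) * (37 * v 0 + 104 * v 2) = 0 := by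
      linear_combination hq - (v 1 - 6 * v 0 - 21 * v 2) * hl
    rcases mul_eq_zero.1 hfac with h | h
    · exact .inl <| exists_smul_eq_of_affine (by linear_combination h)
        (by linear_combination hl - 6 * h)
    · exact .inr <| exists_smul_eq_of_affine (by linear_combination h / 37)
        (by linear_combination hl - (6 / 37) * h)
  · rintro (⟨c, rfl⟩ | ⟨c, rfl⟩) <;> constructor <;>
      simp only [L1, conic, Matrix.cons_val, map_add, map_sub, map_mul, map_pow, eval_X,
        eval_ofNat, Pi.smul_apply, smul_eq_mul] <;> ring

theorem L1_five_inter_conic_iff (v : Fin 3 → ℂ) :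
    eval v (L1 5) = 0 ∧ eval v conic = 0 ↔
      (∃ c : ℂ, c • ![4, -3, 1] = v) ∨ ∃ c : ℂ, c • ![-4, -3, 1] = v := by
  constructor
  · rintro ⟨hl, hq⟩
    simp only [L1, conic, Matrix.cons_val, map_add, map_sub, map_mul, map_pow, eval_X,
      eval_ofNat] at hl hq
    have hfac : (v 0 - 4 * v 2) * (v 0 + 4 * v 2) = 0 := by
      linear_combination hq - (v 1 - 3 * v 2) * hl
    rcases mul_eq_zero.1 hfac with h | h
    · exact .inl <| exists_smul_eq_of_affine (by linear_combination h)
        (by linear_combination hl)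
    · exact .inr <| exists_smul_eq_of_affine (by linear_combination h)
        (by linear_combination hl)
  · rintro (⟨c, rfl⟩ | ⟨c, rfl⟩) <;> constructor <;>
      simp only [L1, conic, Matrix.cons_val, map_add, map_sub, map_mul, map_pow, eval_X,
        eval_ofNat, Pi.smul_apply, smul_eq_mul] <;> ring

theorem L1_pairwise_not_proportional (i j : Fin 6) (hij : i ≠ j) :
    ¬ ∃ c : ℂ, L1 i = c • L1 j := by
  rintro ⟨c, h⟩
  have k01 := eval_mul_eval_eq_of_eq_smul h ![1, 0, 0] ![0, 1, 0]
  have k02 := eval_mul_eval_eq_of_eq_smul h ![1, 0, 0] ![0, 0, 1]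
  have k12 := eval_mul_eval_eq_of_eq_smul h ![0, 1, 0] ![0, 0, 1]
  fin_cases i <;> fin_cases j <;>
    first | exact hij rfl | norm_num [L1, Matrix.cons_val_two] at *

theorem stmt_3 :
    (∀ i j : Fin 6, i ≠ j → ¬ ∃ c : ℂ, L1 i = c • L1 j) ∧
    (∀ i : Fin 6,
      {p : Projectivization ℂ (Fin 3 → ℂ) |
        eval p.rep (L1 i) = 0 ∧ eval p.rep conic = 0}.ncard = 2) := by
  refine ⟨L1_pairwise_not_proportional, fun i => ?_⟩
  fin_cases i
  · exact ncard_setOf_rep_eq_two_of_affine (by norm_num) L1_zero_inter_conic_iff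
  · exact ncard_setOf_rep_eq_two_of_affine (by norm_num) L1_one_inter_conic_iff
  · exact ncard_setOf_rep_eq_two_of_affine (by norm_num) L1_two_inter_conic_iff
  · exact ncard_setOf_rep_eq_two_of_affine (by norm_num) L1_three_inter_conic_iff
  · exact ncard_setOf_rep_eq_two_of_affine (by norm_num) L1_four_inter_conic_iff
  · exact ncard_setOf_rep_eq_two_of_affine (by norm_num) L1_five_inter_conic_iff
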